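/- arXiv:1606.04753 — 7 statements merged into one kernel-verified Lean document; each statement's English description precedes it below -/
import Mathlib

section
/- The sequences of pessimistic safe sets S_t and ergodic safe sets Ŝ_t produced by the algorithm are non-decreasing: for all t ≥ 1, S_0 ⊆ S_t ⊆ S_{t+1} and Ŝ_0 ⊆ Ŝ_t ⊆ Ŝ_{t+1}, given that the lower confidence bounds l_t are non-decreasing in t. -/
def Rret {S A : Type*} (f : S → A → S) (Act : S → Set A) (Sb Ss : Set S) : Set S :=
  Ss ∪ {s ∈ Sb | ∃ a ∈ Act s, f s a ∈ Ss}

def RretN {S A : Type*} (f : S → A → S) (Act : S → Set A) (Sb Ss : Set S) : ℕ → Set S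
  | 0 => Ss
  | n + 1 => Rret f Act Sb (RretN f Act Sb Ss n)

def RretBar {S A : Type*} (f : S → A → S) (Act : S → Set A) (Sb Ss : Set S) : Set S :=
  ⋃ n : ℕ, RretN f Act Sb Ss n

def Rreach {S A : Type*} (f : S → A → S) (Act : S → Set A) (Ss : Set S) : Set S :=
  Ss ∪ {s | ∃ sh ∈ Ss, ∃ ah ∈ Act sh, s = f sh ah}

/-! A state of `Ŝ_t` is trivially reachable from, and returnable to, `Ŝ_t`, so it survives
into `Ŝ_{t+1}` as soon as it lies in `S_{t+1}`; and `S_{t+1}` grows with `Ŝ_t` and with the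
monotone bounds `l_t`. A joint induction closes the loop, starting from `Ŝ_0 ⊆ S_1`, where
each state of `S_0` witnesses its own membership since `d s s = 0`. -/

section SafeSets

variable {S A : Type*}

/-- The paper's pessimistic safe set is `S_t = safeExpansion d L h (l t) Ŝ_{t-1}`. -/
def safeExpansion (d : S → S → ℝ) (L h : ℝ) (l : S → ℝ) (X : Set S) : Set S :=
  {s | ∃ s' ∈ X, l s' - L * d s s' ≥ h}

theorem safeExpansion_mono {d : S → S → ℝ} {L h : ℝ} {l l' : S → ℝ} {X Y : Set S}
    (hl : ∀ s, l s ≤ l' s) (hXY : X ⊆ Y) :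
    safeExpansion d L h l X ⊆ safeExpansion d L h l' Y := by
  rintro s ⟨s', hs', hge⟩
  exact ⟨s', hXY hs', by linarith [hl s']⟩

theorem subset_safeExpansion {d : S → S → ℝ} {L h : ℝ} {l : S → ℝ} {X : Set S}
    (hd : ∀ s, d s s = 0) (hX : ∀ s ∈ X, h ≤ l s) : X ⊆ safeExpansion d L h l X :=
  fun s hs => ⟨s, hs, by simpa [hd] using hX s hs⟩

theorem subset_sep_Rreach_RretBar (f : S → A → S) (Act : S → Set A) {Sb Ss : Set S}
    (hSs : Ss ⊆ Sb) :
    Ss ⊆ {s ∈ Sb | s ∈ Rreach f Act Ss ∧ s ∈ RretBar f Act Sb Ss} :=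
  fun _ hs => ⟨hSs hs, Or.inl hs, Set.mem_iUnion.2 ⟨0, hs⟩⟩

end SafeSets

theorem stmt8_general {S A : Type*} (f : S → A → S) (Act : S → Set A)
    (d : S → S → ℝ) (hd : ∀ s, d s s = 0) (L h : ℝ)
    (l : ℕ → S → ℝ) (hl : ∀ t s, l t s ≤ l (t + 1) s)
    (St Sh : ℕ → Set S)
    (hinit : Sh 0 = St 0)
    (hsafe0 : St 0 ⊆ {s | l 0 s ≥ h})
    (hSt : ∀ t : ℕ, 1 ≤ t →
      St t = {s | ∃ s' ∈ Sh (t - 1), l t s' - L * d s s' ≥ h})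
    (hSh : ∀ t : ℕ, 1 ≤ t →
      Sh t = {s ∈ St t | s ∈ Rreach f Act (Sh (t - 1)) ∧
        s ∈ RretBar f Act (St t) (Sh (t - 1))}) :
    ∀ t : ℕ, 1 ≤ t →
      St 0 ⊆ St t ∧ St t ⊆ St (t + 1) ∧ Sh 0 ⊆ Sh t ∧ Sh t ⊆ Sh (t + 1) := by
  have hSt' (t : ℕ) : St (t + 1) = safeExpansion d L h (l (t + 1)) (Sh t) :=
    hSt (t + 1) le_add_self
  have hSh' (t : ℕ) : Sh (t + 1) = {s ∈ St (t + 1) | s ∈ Rreach f Act (Sh t) ∧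
      s ∈ RretBar f Act (St (t + 1)) (Sh t)} :=
    hSh (t + 1) le_add_self
  have hShSt : ∀ t, Sh t ⊆ St t
    | 0 => hinit.le
    | t + 1 => hSh' t ▸ Set.sep_subset _ _
  have hStStep (t : ℕ) (hSh_succ : Sh t ⊆ Sh (t + 1)) : St (t + 1) ⊆ St (t + 2) := by
    rw [hSt', hSt']
    exact safeExpansion_mono (hl (t + 1)) hSh_succ
  have hShMono : Monotone Sh := by
    refine monotone_nat_of_le_succ fun t => ?_
    induction t with
    | zero =>
      rw [hSh' 0, hSt' 0]
      refine subset_sep_Rreach_RretBar f Act (subset_safeExpansion hd fun s hs => ?_)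
      exact (hsafe0 (hinit ▸ hs)).trans (hl 0 s)
    | succ t ih =>
      rw [hSh' (t + 1)]
      exact subset_sep_Rreach_RretBar f Act ((hShSt _).trans (hStStep t ih))
  have hStMono : Monotone fun t => St (t + 1) :=
    monotone_nat_of_le_succ fun t => hStStep t (hShMono t.le_succ)
  intro t ht
  obtain ⟨k, rfl⟩ : ∃ k, t = k + 1 := ⟨t - 1, by omega⟩
  have hSt01 : St 0 ⊆ St 1 := hinit ▸ (hShMono (Nat.zero_le 1)).trans (hShSt 1)
  exact ⟨hSt01.trans (hStMono (Nat.zero_le k)), hStMono k.le_succ, hShMono (Nat.zero_le _),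
    hShMono (k + 1).le_succ⟩

theorem stmt8 {S A : Type*} [Fintype S] (f : S → A → S) (Act : S → Set A)
    (d : S → S → ℝ) (hd : ∀ s, d s s = 0) (L h : ℝ) (hL : 0 < L)
    (l : ℕ → S → ℝ) (hl : ∀ t s, l t s ≤ l (t + 1) s)
    (St Sh : ℕ → Set S)
    (hinit : Sh 0 = St 0)
    (hsafe0 : St 0 ⊆ {s | l 0 s ≥ h})
    (hreach0 : ∀ s ∈ St 0, s ∈ Rreach f Act (St 0))
    (hSt : ∀ t : ℕ, 1 ≤ t →
      St t = {s | ∃ s' ∈ Sh (t - 1), l t s' - L * d s s' ≥ h})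
    (hSh : ∀ t : ℕ, 1 ≤ t →
      Sh t = {s ∈ St t | s ∈ Rreach f Act (Sh (t - 1)) ∧
        s ∈ RretBar f Act (St t) (Sh (t - 1))}) :
    ∀ t : ℕ, 1 ≤ t →
      St 0 ⊆ St t ∧ St t ⊆ St (t + 1) ∧ Sh 0 ⊆ Sh t ∧ Sh t ⊆ Sh (t + 1) :=
  stmt8_general f Act d hd L h l hl St Sh hinit hsafe0 hSt hSh
end

section
/- For all t ≥ 1 and all s ∈ Ŝ_t, there exists a state s' ∈ S_0 such that s ∈ R̄^ret(S_t, {s'}); i.e., from any state in the ergodic safe set there is a path through the pessimistic safe set S_t back to some initial safe state. -/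
section Return

variable {S A : Type*} {f : S → A → S} {Act : S → Set A} {Sb Sb' Ss T : Set S}

lemma Rret_mono_left (hb : Sb ⊆ Sb') : Rret f Act Sb Ss ⊆ Rret f Act Sb' Ss := by
  rintro s (hs | ⟨hsb, a, ha, hfa⟩)
  · exact Or.inl hs
  · exact Or.inr ⟨hb hsb, a, ha, hfa⟩

lemma subset_RretBar : Ss ⊆ RretBar f Act Sb Ss :=
  fun _ hs => Set.mem_iUnion.2 ⟨0, hs⟩

lemma Rret_RretBar_subset : Rret f Act Sb (RretBar f Act Sb Ss) ⊆ RretBar f Act Sb Ss := by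
  rintro s (hs | ⟨hsb, a, ha, hfa⟩)
  · exact hs
  · obtain ⟨n, hn⟩ := Set.mem_iUnion.1 hfa
    exact Set.mem_iUnion.2 ⟨n + 1, Or.inr ⟨hsb, a, ha, hn⟩⟩

lemma RretN_subset (hT : Rret f Act Sb T ⊆ T) (hs : Ss ⊆ T) :
    ∀ n, RretN f Act Sb Ss n ⊆ T
  | 0 => hs
  | n + 1 => by
    rintro s (hs' | ⟨hsb, a, ha, hfa⟩)
    · exact RretN_subset hT hs n hs'
    · exact hT (Or.inr ⟨hsb, a, ha, RretN_subset hT hs n hfa⟩)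

lemma RretBar_subset (hT : Rret f Act Sb T ⊆ T) (hs : Ss ⊆ T) : RretBar f Act Sb Ss ⊆ T :=
  Set.iUnion_subset (RretN_subset hT hs)

lemma RretBar_trans (hs : Ss ⊆ RretBar f Act Sb T) :
    RretBar f Act Sb Ss ⊆ RretBar f Act Sb T :=
  RretBar_subset Rret_RretBar_subset hs

lemma RretBar_mono_left (hb : Sb ⊆ Sb') : RretBar f Act Sb Ss ⊆ RretBar f Act Sb' Ss :=
  RretBar_subset ((Rret_mono_left hb).trans Rret_RretBar_subset) subset_RretBar

lemma exists_mem_RretN_singleton {s : S} :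
    ∀ n, s ∈ RretN f Act Sb Ss n → ∃ s₀ ∈ Ss, s ∈ RretN f Act Sb {s₀} n
  | 0, hs => ⟨s, hs, rfl⟩
  | n + 1, Or.inl hs =>
    let ⟨s₀, hs₀, hmem⟩ := exists_mem_RretN_singleton n hs
    ⟨s₀, hs₀, Or.inl hmem⟩
  | n + 1, Or.inr ⟨hsb, a, ha, hfa⟩ =>
    let ⟨s₀, hs₀, hmem⟩ := exists_mem_RretN_singleton n hfa
    ⟨s₀, hs₀, Or.inr ⟨hsb, a, ha, hmem⟩⟩

lemma exists_mem_RretBar_singleton {s : S} (hs : s ∈ RretBar f Act Sb Ss) :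
    ∃ s₀ ∈ Ss, s ∈ RretBar f Act Sb {s₀} := by
  obtain ⟨n, hn⟩ := Set.mem_iUnion.1 hs
  obtain ⟨s₀, hs₀, hmem⟩ := exists_mem_RretN_singleton n hn
  exact ⟨s₀, hs₀, Set.mem_iUnion.2 ⟨n, hmem⟩⟩

end Return

theorem stmt9_general {S A : Type*} (f : S → A → S) (Act : S → Set A)
    (St Sh : ℕ → Set S)
    (hinit : Sh 0 = St 0)
    (hStMono : ∀ t, St t ⊆ St (t + 1))
    (hSh : ∀ t : ℕ, 1 ≤ t →
      Sh t = {s ∈ St t | s ∈ Rreach f Act (Sh (t - 1)) ∧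
        s ∈ RretBar f Act (St t) (Sh (t - 1))}) :
    ∀ t : ℕ, 1 ≤ t → ∀ s ∈ Sh t,
      ∃ s' ∈ St 0, s ∈ RretBar f Act (St t) {s'} := by
  have hreturn : ∀ t, Sh t ⊆ RretBar f Act (St t) (Sh 0) := by
    intro t
    induction t with
    | zero => exact subset_RretBar
    | succ t ih =>
      have hstep : Sh (t + 1) ⊆ RretBar f Act (St (t + 1)) (Sh t) := fun s hs => by
        rw [hSh (t + 1) (Nat.le_add_left 1 t)] at hs
        exact hs.2.2
      exact hstep.trans (RretBar_trans (ih.trans (RretBar_mono_left (hStMono t))))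
  intro t _ s hs
  obtain ⟨s', hs', hmem⟩ := exists_mem_RretBar_singleton (hreturn t hs)
  exact ⟨s', hinit ▸ hs', hmem⟩

theorem stmt9 {S A : Type*} [Fintype S] (f : S → A → S) (Act : S → Set A)
    (d : S → S → ℝ) (L h : ℝ) (hL : 0 < L)
    (l : ℕ → S → ℝ) (hl : ∀ t s, l t s ≤ l (t + 1) s)
    (St Sh : ℕ → Set S)
    (hinit : Sh 0 = St 0)
    (hStMono : ∀ t, St t ⊆ St (t + 1))
    (hSt : ∀ t : ℕ, 1 ≤ t →
      St t = {s | ∃ s' ∈ Sh (t - 1), l t s' - L * d s s' ≥ h})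
    (hSh : ∀ t : ℕ, 1 ≤ t →
      Sh t = {s ∈ St t | s ∈ Rreach f Act (Sh (t - 1)) ∧
        s ∈ RretBar f Act (St t) (Sh (t - 1))}) :
    ∀ t : ℕ, 1 ≤ t → ∀ s ∈ Sh t,
      ∃ s' ∈ St 0, s ∈ RretBar f Act (St t) {s'} :=
  stmt9_general f Act St Sh hinit hStMono hSh
end

section
/- If the confidence bounds are correct (l_t(s) ≤ r(s) for all s, t) and every state in S_0 satisfies r(s) ≥ h, then every state in S_t satisfies r(s) ≥ h, for all t ≥ 0 (safety of the pessimistic safe set). -/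
theorem le_of_le_lowerBound_sub_lipschitz {S : Type*} {d : S → S → ℝ} {r l : S → ℝ} {L h : ℝ}
    (hLip : ∀ s s' : S, r s' - L * d s s' ≤ r s) (hl : ∀ s, l s ≤ r s) {s s' : S}
    (hs : h ≤ l s' - L * d s s') : h ≤ r s :=
  calc h ≤ l s' - L * d s s' := hs
    _ ≤ r s' - L * d s s' := by linarith [hl s']
    _ ≤ r s := hLip s s'

theorem stmt10_general {S : Type*}
    (d : S → S → ℝ) (r : S → ℝ) (L h : ℝ)
    (hLip : ∀ s s' : S, r s' - L * d s s' ≤ r s)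
    (l : ℕ → S → ℝ) (hl : ∀ t s, l t s ≤ r s)
    (St Sh : ℕ → Set S)
    (hsafe0 : ∀ s ∈ St 0, r s ≥ h)
    (hSt : ∀ t : ℕ, 1 ≤ t →
      St t = {s | ∃ s' ∈ Sh (t - 1), l t s' - L * d s s' ≥ h}) :
    ∀ t : ℕ, ∀ s ∈ St t, r s ≥ h := by
  intro t s hs
  rcases Nat.eq_zero_or_pos t with rfl | ht
  · exact hsafe0 s hs
  · rw [hSt t ht] at hs
    obtain ⟨s', -, hs'⟩ := hs
    exact le_of_le_lowerBound_sub_lipschitz hLip (hl t) hs'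

theorem stmt10 {S : Type*} [Fintype S]
    (d : S → S → ℝ) (r : S → ℝ) (L h : ℝ) (hL : 0 < L)
    (hLip : ∀ s s' : S, r s' - L * d s s' ≤ r s)
    (l : ℕ → S → ℝ) (hl : ∀ t s, l t s ≤ r s)
    (St Sh : ℕ → Set S)
    (hinit : Sh 0 = St 0)
    (hsafe0 : ∀ s ∈ St 0, r s ≥ h)
    (hShSub : ∀ t, Sh t ⊆ St t)
    (hSt : ∀ t : ℕ, 1 ≤ t →
      St t = {s | ∃ s' ∈ Sh (t - 1), l t s' - L * d s s' ≥ h}) :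
    ∀ t : ℕ, ∀ s ∈ St t, r s ≥ h :=
  stmt10_general d r L h hLip l hl St Sh hsafe0 hSt
end

section
/- If the uncertainties are non-increasing (u_{t+1}(s) ≤ u_t(s)), the sets S_t are non-decreasing, and the ergodic safe set does not change between times t_0 and t_1 (Ŝ_{t_1} = Ŝ_{t_0}), then the expander sets are nested: G_{t+1} ⊆ G_t for all t_0 ≤ t < t_1. -/
/-- Enlargement count: number of unsafe states that the upper bound at `s` certifies safe. -/
noncomputable def gcount {S : Type*} (d : S → S → ℝ) (u : ℕ → S → ℝ) (L h : ℝ)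
    (St : ℕ → Set S) (t : ℕ) (s : S) : ℕ :=
  Set.ncard {s' : S | s' ∉ St t ∧ u t s - L * d s s' ≥ h}

/-- Expander set `G_t = {s ∈ Ŝ_t | g_t(s) > 0}`. -/
noncomputable def Gset {S : Type*} (d : S → S → ℝ) (u : ℕ → S → ℝ) (L h : ℝ)
    (St Sh : ℕ → Set S) (t : ℕ) : Set S :=
  {s ∈ Sh t | 0 < gcount d u L h St t s}

/-! Shrinking upper bounds and growing safe sets can only remove states from those counted by
`g_t(s)`, so a witness for `g_{t+1}(s) > 0` is still one for `g_t(s) > 0`; and a monotone `Ŝ`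
that agrees at `t₀` and `t₁` is constant in between. -/

theorem Monotone.apply_eq_of_apply_eq {α β : Type*} [Preorder α] [PartialOrder β]
    {f : α → β} (hf : Monotone f) {a b t : α} (hfix : f b = f a) (hat : a ≤ t) (htb : t ≤ b) :
    f t = f a :=
  le_antisymm (hfix ▸ hf htb) (hf hat)

section Expander

variable {S : Type*} (d : S → S → ℝ) (u : ℕ → S → ℝ) (L h : ℝ) (St Sh : ℕ → Set S)

theorem gcount_pos_iff [Finite S] (t : ℕ) (s : S) :
    0 < gcount d u L h St t s ↔ ∃ s', s' ∉ St t ∧ h ≤ u t s - L * d s s' :=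
  Set.ncard_pos (Set.toFinite _)

variable {u St} in
theorem gcount_pos_of_gcount_succ_pos [Finite S] {t : ℕ} {s : S}
    (hu : u (t + 1) s ≤ u t s) (hSt : St t ⊆ St (t + 1))
    (hg : 0 < gcount d u L h St (t + 1) s) : 0 < gcount d u L h St t s := by
  obtain ⟨s', hs'St, hs'u⟩ := (gcount_pos_iff d u L h St (t + 1) s).mp hg
  exact (gcount_pos_iff d u L h St t s).mpr ⟨s', fun hs' => hs'St (hSt hs'), by linarith⟩

variable {u St Sh} in
theorem Gset_succ_subset [Finite S] {t : ℕ}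
    (hu : ∀ s, u (t + 1) s ≤ u t s) (hSt : St t ⊆ St (t + 1)) (hSh : Sh (t + 1) ⊆ Sh t) :
    Gset d u L h St Sh (t + 1) ⊆ Gset d u L h St Sh t :=
  fun s ⟨hsSh, hg⟩ => ⟨hSh hsSh, gcount_pos_of_gcount_succ_pos d L h (hu s) hSt hg⟩

end Expander

theorem stmt11_general {S : Type*} [Fintype S]
    (d : S → S → ℝ) (L h : ℝ)
    (u : ℕ → S → ℝ) (hu : ∀ t s, u (t + 1) s ≤ u t s)
    (St Sh : ℕ → Set S)
    (hStMono : ∀ t, St t ⊆ St (t + 1))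
    (hShMono : ∀ t, Sh t ⊆ Sh (t + 1))
    (t₀ t₁ : ℕ) (hfix : Sh t₁ = Sh t₀) :
    ∀ t, t₀ ≤ t → t < t₁ →
      Gset d u L h St Sh (t + 1) ⊆ Gset d u L h St Sh t := by
  intro t ht₀ ht₁
  have hSh : Monotone Sh := monotone_nat_of_le_succ hShMono
  have hconst : Sh (t + 1) = Sh t := by
    rw [hSh.apply_eq_of_apply_eq hfix (by omega) ht₁, hSh.apply_eq_of_apply_eq hfix ht₀ ht₁.le]
  exact Gset_succ_subset d L h (hu t) (hStMono t) hconst.subset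

theorem stmt11 {S : Type*} [Fintype S]
    (d : S → S → ℝ) (L h : ℝ) (hL : 0 < L)
    (u : ℕ → S → ℝ) (hu : ∀ t s, u (t + 1) s ≤ u t s)
    (St Sh : ℕ → Set S)
    (hStMono : ∀ t, St t ⊆ St (t + 1))
    (hShSub : ∀ t, Sh t ⊆ St t)
    (hShMono : ∀ t, Sh t ⊆ Sh (t + 1))
    (t₀ t₁ : ℕ) (ht : t₀ ≤ t₁) (hfix : Sh t₁ = Sh t₀) :
    ∀ t, t₀ ≤ t → t < t₁ →
      Gset d u L h St Sh (t + 1) ⊆ Gset d u L h St Sh t :=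
  stmt11_general d L h u hu St Sh hStMono hShMono t₀ t₁ hfix
end

section
/- If the fully ε-safely-reachable set is not contained in the current ergodic safe set (R̄_ε(S_0) \ Ŝ_t ≠ ∅), then one application of the safe-expansion operator to Ŝ_t yields a new state: R_ε(Ŝ_t) \ Ŝ_t ≠ ∅. -/
def Rsafe {S : Type*} (d : S → S → ℝ) (r : S → ℝ) (L h ε : ℝ) (Ss : Set S) : Set S :=
  Ss ∪ {s | ∃ s' ∈ Ss, r s' - ε - L * d s s' ≥ h}

def Reps {S A : Type*} (f : S → A → S) (Act : S → Set A) (d : S → S → ℝ)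
    (r : S → ℝ) (L h ε : ℝ) (Ss : Set S) : Set S :=
  Rreach f Act Ss ∩ RretBar f Act (Rsafe d r L h ε Ss) Ss

def RepsBar {S A : Type*} (f : S → A → S) (Act : S → Set A) (d : S → S → ℝ)
    (r : S → ℝ) (L h ε : ℝ) (Ss : Set S) : Set S :=
  ⋃ n : ℕ, (Reps f Act d r L h ε)^[n] Ss

theorem Monotone.iterate_le_of_map_le_self {α : Type*} [Preorder α] {F : α → α}
    (hF : Monotone F) {x y : α} (hxy : x ≤ y) (hy : F y ≤ y) (n : ℕ) : F^[n] x ≤ y := by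
  induction n with
  | zero => exact hxy
  | succ n ih =>
    rw [Function.iterate_succ_apply']
    exact (hF ih).trans hy

section Monotonicity

variable {S A : Type*} (f : S → A → S) (Act : S → Set A)

lemma Rret_mono {Sb Sb' Ss Ss' : Set S} (hb : Sb ⊆ Sb') (hs : Ss ⊆ Ss') :
    Rret f Act Sb Ss ⊆ Rret f Act Sb' Ss' := by
  rintro s (hss | ⟨hsb, a, ha, hfa⟩)
  · exact Or.inl (hs hss)
  · exact Or.inr ⟨hb hsb, a, ha, hs hfa⟩

lemma RretN_mono {Sb Sb' Ss Ss' : Set S} (hb : Sb ⊆ Sb') (hs : Ss ⊆ Ss') (n : ℕ) :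
    RretN f Act Sb Ss n ⊆ RretN f Act Sb' Ss' n := by
  induction n with
  | zero => exact hs
  | succ n ih => exact Rret_mono f Act hb ih

lemma RretBar_mono {Sb Sb' Ss Ss' : Set S} (hb : Sb ⊆ Sb') (hs : Ss ⊆ Ss') :
    RretBar f Act Sb Ss ⊆ RretBar f Act Sb' Ss' :=
  Set.iUnion_mono fun n => RretN_mono f Act hb hs n

lemma Rreach_mono : Monotone (Rreach f Act) := by
  rintro Ss Ss' hs s (hss | ⟨sh, hsh, ah, hah, rfl⟩)
  · exact Or.inl (hs hss)
  · exact Or.inr ⟨sh, hs hsh, ah, hah, rfl⟩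

lemma Rsafe_mono (d : S → S → ℝ) (r : S → ℝ) (L h ε : ℝ) : Monotone (Rsafe d r L h ε) := by
  rintro Ss Ss' hs s (hss | ⟨s', hs', hr⟩)
  · exact Or.inl (hs hss)
  · exact Or.inr ⟨s', hs hs', hr⟩

lemma Reps_mono (d : S → S → ℝ) (r : S → ℝ) (L h ε : ℝ) :
    Monotone (Reps f Act d r L h ε) := fun _ _ hs =>
  Set.inter_subset_inter (Rreach_mono f Act hs)
    (RretBar_mono f Act (Rsafe_mono d r L h ε hs) hs)

end Monotonicity

lemma RepsBar_subset_of_Reps_subset {S A : Type*} (f : S → A → S) (Act : S → Set A)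
    (d : S → S → ℝ) (r : S → ℝ) (L h ε : ℝ) {S0 T : Set S} (hS0 : S0 ⊆ T)
    (hT : Reps f Act d r L h ε T ⊆ T) : RepsBar f Act d r L h ε S0 ⊆ T :=
  Set.iUnion_subset fun n => (Reps_mono f Act d r L h ε).iterate_le_of_map_le_self hS0 hT n

theorem stmt12_general {S A : Type*} (f : S → A → S) (Act : S → Set A)
    (d : S → S → ℝ) (r : S → ℝ) (L h ε : ℝ)
    (S0 Sht : Set S) (hS0 : S0 ⊆ Sht)
    (hne : (RepsBar f Act d r L h ε S0 \ Sht).Nonempty) :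
    (Reps f Act d r L h ε Sht \ Sht).Nonempty := by
  rw [Set.sdiff_nonempty] at hne ⊢
  exact fun hclosed => hne (RepsBar_subset_of_Reps_subset f Act d r L h ε hS0 hclosed)

theorem stmt12 {S A : Type*} [Fintype S] (f : S → A → S) (Act : S → Set A)
    (d : S → S → ℝ) (r : S → ℝ) (L h ε : ℝ) (hL : 0 < L) (hε : 0 ≤ ε)
    (S0 Sht : Set S) (hS0 : S0 ⊆ Sht)
    (hexp : ∀ T : Set S, T ⊆ Reps f Act d r L h ε T)
    (hne : (RepsBar f Act d r L h ε S0 \ Sht).Nonempty) :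
    (Reps f Act d r L h ε Sht \ Sht).Nonempty :=
  stmt12_general f Act d r L h ε S0 Sht hS0 hne
end

section
/- If the confidence bounds are correct (l_t(s) ≤ r(s) ≤ u_t(s) for all s, t) and r is L-Lipschitz, then for all t ≥ 0 the ergodic safe set is contained in the largest safely learnable set: Ŝ_t ⊆ R̄_0(S_0). -/
/-! By induction on `t`, `Ŝ_t ⊆ Reps^[t] S₀` (with `ε = 0`). Since `l_t ≤ r`, every state certified
safe by `l_t` from `Ŝ_{t-1}` is certified by `r` from the larger set `Reps^[t-1] S₀`, so
`S_t ⊆ Rsafe (Reps^[t-1] S₀)`; the step then follows because `Rreach` and `RretBar` are monotone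
in all their set arguments. -/

section Monotonicity

variable {S A : Type*} (f : S → A → S) (Act : S → Set A)

lemma Rreach_mono_s13 {Ss Ss' : Set S} (h : Ss ⊆ Ss') : Rreach f Act Ss ⊆ Rreach f Act Ss' := by
  rintro s (hs | ⟨sh, hsh, ah, hah, rfl⟩)
  · exact Or.inl (h hs)
  · exact Or.inr ⟨sh, h hsh, ah, hah, rfl⟩

end Monotonicity

lemma setOf_lowerBound_safe_subset_Rsafe {S : Type*} (d : S → S → ℝ) {r l : S → ℝ}
    (L h : ℝ) (hl : ∀ s, l s ≤ r s) {Ss T : Set S} (hST : Ss ⊆ T) :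
    {s | ∃ s' ∈ Ss, l s' - L * d s s' ≥ h} ⊆ Rsafe d r L h 0 T := by
  rintro s ⟨s', hs', hls'⟩
  exact Or.inr ⟨s', hST hs', by linarith [hl s']⟩

lemma sep_Rreach_RretBar_subset_Reps {S A : Type*} (f : S → A → S) (Act : S → Set A)
    (d : S → S → ℝ) (r : S → ℝ) (L h : ℝ) {Sn Sprev T : Set S} (hprev : Sprev ⊆ T)
    (hsafe : Sn ⊆ Rsafe d r L h 0 T) :
    {s ∈ Sn | s ∈ Rreach f Act Sprev ∧ s ∈ RretBar f Act Sn Sprev} ⊆ Reps f Act d r L h 0 T :=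
  fun _ ⟨_, hreach, hret⟩ =>
    ⟨Rreach_mono_s13 f Act hprev hreach, RretBar_mono f Act hsafe hprev hret⟩

lemma iterate_subset_RepsBar {S A : Type*} (f : S → A → S) (Act : S → Set A)
    (d : S → S → ℝ) (r : S → ℝ) (L h ε : ℝ) (Ss : Set S) (n : ℕ) :
    (Reps f Act d r L h ε)^[n] Ss ⊆ RepsBar f Act d r L h ε Ss :=
  Set.subset_iUnion_of_subset n subset_rfl

theorem stmt13_general {S A : Type*} (f : S → A → S) (Act : S → Set A)
    (d : S → S → ℝ) (r : S → ℝ) (L h : ℝ)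
    (l u : ℕ → S → ℝ) (hlu : ∀ t s, l t s ≤ r s ∧ r s ≤ u t s)
    (St Sh : ℕ → Set S) (S0 : Set S)
    (hinit : Sh 0 = S0)
    (hSt : ∀ t : ℕ, 1 ≤ t →
      St t = {s | ∃ s' ∈ Sh (t - 1), l t s' - L * d s s' ≥ h})
    (hSh : ∀ t : ℕ, 1 ≤ t →
      Sh t = {s ∈ St t | s ∈ Rreach f Act (Sh (t - 1)) ∧
        s ∈ RretBar f Act (St t) (Sh (t - 1))}) :
    ∀ t : ℕ, Sh t ⊆ RepsBar f Act d r L h 0 S0 := by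
  have hSh_iterate : ∀ t, Sh t ⊆ (Reps f Act d r L h 0)^[t] S0 := by
    intro t
    induction t with
    | zero => exact hinit.subset
    | succ t ih =>
      have hSt_safe : St (t + 1) ⊆ Rsafe d r L h 0 ((Reps f Act d r L h 0)^[t] S0) := by
        rw [hSt (t + 1) t.succ_pos]
        exact setOf_lowerBound_safe_subset_Rsafe d L h (fun s => (hlu (t + 1) s).1) ih
      rw [hSh (t + 1) t.succ_pos, Function.iterate_succ_apply']
      exact sep_Rreach_RretBar_subset_Reps f Act d r L h ih hSt_safe
  exact fun t => (hSh_iterate t).trans (iterate_subset_RepsBar f Act d r L h 0 S0 t)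

theorem stmt13 {S A : Type*} [Fintype S] (f : S → A → S) (Act : S → Set A)
    (d : S → S → ℝ) (r : S → ℝ) (L h : ℝ) (hL : 0 < L)
    (hLip : ∀ s s' : S, r s' - L * d s s' ≤ r s)
    (l u : ℕ → S → ℝ) (hlu : ∀ t s, l t s ≤ r s ∧ r s ≤ u t s)
    (St Sh : ℕ → Set S) (S0 : Set S)
    (hinit : Sh 0 = S0) (hinit' : St 0 = S0)
    (hsafe0 : S0 ⊆ {s | r s ≥ h})
    (hSt : ∀ t : ℕ, 1 ≤ t →
      St t = {s | ∃ s' ∈ Sh (t - 1), l t s' - L * d s s' ≥ h})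
    (hSh : ∀ t : ℕ, 1 ≤ t →
      Sh t = {s ∈ St t | s ∈ Rreach f Act (Sh (t - 1)) ∧
        s ∈ RretBar f Act (St t) (Sh (t - 1))}) :
    ∀ t : ℕ, Sh t ⊆ RepsBar f Act d r L h 0 S0 :=
  stmt13_general f Act d r L h l u hlu St Sh S0 hinit hSt hSh
end

section
/- Suppose Ŝ_t is a non-decreasing sequence of subsets of a finite set with |Ŝ_t| ≤ M for all t, Ŝ_0 ≠ ∅, and T : ℕ → ℕ is a non-decreasing function. Let t* be the smallest integer with t* ≥ M · T(t*). Then there exists t_0 ≤ t* such that Ŝ_{t_0 + T(t_0)} = Ŝ_{t_0}. -/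
/-! If `Ŝ` grew strictly at every `t ≤ t*`, then, since `T` is non-decreasing, it would grow
strictly along the arithmetic progression `k · T(t*)` for `k ≤ M`, all of whose terms are `≤ t*`.
That is a chain of `M + 1` strict inclusions starting from a nonempty set, so `|Ŝ_{(M+1) T(t*)}| > M`. -/

theorem Set.ncard_add_le_of_ssubset_succ {α : Type*} {s : ℕ → Set α} {n : ℕ}
    (hfin : (s n).Finite) (hs : ∀ k < n, s k ⊂ s (k + 1)) : (s 0).ncard + n ≤ (s n).ncard := by
  induction n with
  | zero => rfl
  | succ n ih =>
    have hlt : s n ⊂ s (n + 1) := hs n n.lt_succ_self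
    have hstep : (s n).ncard < (s (n + 1)).ncard := Set.ncard_lt_ncard hlt hfin
    have hprev := ih (hfin.subset hlt.subset) fun k hk => hs k (hk.trans n.lt_succ_self)
    omega

theorem stmt14_general {α : Type*} [Fintype α]
    (Sh : ℕ → Set α) (hmono : ∀ s t : ℕ, s ≤ t → Sh s ⊆ Sh t)
    (M : ℕ) (hcard : ∀ t, (Sh t).ncard ≤ M)
    (hne : (Sh 0).Nonempty)
    (T : ℕ → ℕ) (hT : Monotone T)
    (tstar : ℕ) (hstar : M * T tstar ≤ tstar) :
    ∃ t₀ ≤ tstar, Sh (t₀ + T t₀) = Sh t₀ := by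
  by_contra! hstat
  have hgrow : ∀ t ≤ tstar, Sh t ⊂ Sh (t + T t) := fun t ht =>
    (hmono t _ (Nat.le_add_right _ _)).ssubset_of_ne (hstat t ht).symm
  have hchain : ∀ k < M + 1, Sh (k * T tstar) ⊂ Sh ((k + 1) * T tstar) := by
    intro k hk
    have hle : k * T tstar ≤ tstar := (Nat.mul_le_mul_right _ (Nat.le_of_lt_succ hk)).trans hstar
    refine (hgrow _ hle).trans_subset (hmono _ _ ?_)
    rw [Nat.succ_mul]
    exact Nat.add_le_add_left (hT hle) _
  have hgain := Set.ncard_add_le_of_ssubset_succ (Set.toFinite _) hchain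
  have hpos : 0 < (Sh (0 * T tstar)).ncard := by simpa using (Set.ncard_pos (Set.toFinite _)).mpr hne
  have := hcard ((M + 1) * T tstar)
  omega

theorem stmt14 {α : Type*} [Fintype α]
    (Sh : ℕ → Set α) (hmono : ∀ s t : ℕ, s ≤ t → Sh s ⊆ Sh t)
    (M : ℕ) (hcard : ∀ t, (Sh t).ncard ≤ M)
    (hne : (Sh 0).Nonempty)
    (T : ℕ → ℕ) (hT : Monotone T)
    (tstar : ℕ) (hstar : M * T tstar ≤ tstar)
    (hmin : ∀ t, M * T t ≤ t → tstar ≤ t) :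
    ∃ t₀ ≤ tstar, Sh (t₀ + T t₀) = Sh t₀ :=
  stmt14_general Sh hmono M hcard hne T hT tstar hstar
end
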